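/- Let X_1, …, X_n be i.i.d. with cdf F(t) = ∫ Φ(t − μ) dH(μ), where H is a probability distribution with H([0, √(2 log n)]) = 1. Then for every constant c, P(Y_n ≥ c) ≤ 2 P(W_n^+ ≥ c). -/

import Mathlib

open MeasureTheory ProbabilityTheory Filter
open scoped Classical

noncomputable section

/-- The standard normal density. -/
def stdPdf (x : ℝ) : ℝ := (Real.sqrt (2 * Real.pi))⁻¹ * Real.exp (-(x ^ 2) / 2)

/-- The standard normal cumulative distribution function. -/
def Phi (t : ℝ) : ℝ := ∫ x in Set.Iic t, stdPdf x

/-- `D(μ; τ, τ')`. -/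
def Dfun (μ τ τ' : ℝ) : ℝ := (Phi τ - Phi (τ - μ)) / (Phi τ' - Phi (τ' - μ))

/-- Empirical cdf of a sample of size `n`. -/
def empCdf (n : ℕ) (X : Fin n → ℝ) (t : ℝ) : ℝ :=
  (n : ℝ)⁻¹ * ∑ i, if X i ≤ t then (1 : ℝ) else 0

/-- Upper envelope `F⁺ₐ`. -/
def envP (n : ℕ) (a : ℝ) (G : ℝ → ℝ) (t : ℝ) : ℝ :=
  (2 * G t + a ^ 2 / n + (a / Real.sqrt n) * Real.sqrt (a ^ 2 / n + 4 * G t - 4 * (G t) ^ 2)) /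
    (2 * (1 + a ^ 2 / n))

/-- Lower envelope `F⁻ₐ`. -/
def envM (n : ℕ) (a : ℝ) (G : ℝ → ℝ) (t : ℝ) : ℝ :=
  (2 * G t + a ^ 2 / n - (a / Real.sqrt n) * Real.sqrt (a ^ 2 / n + 4 * G t - 4 * (G t) ^ 2)) /
    (2 * (1 + a ^ 2 / n))

/-- Grid points `t_j = (j - 1)/√(2 log n)`. -/
def gridPt (n : ℕ) (j : ℕ) : ℝ := ((j : ℝ) - 1) / Real.sqrt (2 * Real.log n)

/-- Right-hand side ratio used in the defining equation for `μ̂⁽ʲ⁾`. -/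
def ratioJ (n : ℕ) (a : ℝ) (X : Fin n → ℝ) (j : ℕ) : ℝ :=
  (Phi (gridPt n j) - envP n a (empCdf n X) (gridPt n j)) /
    (Phi (gridPt n (j + 1)) - envM n a (empCdf n X) (gridPt n (j + 1)))

/-- `μ̂⁽ʲ⁾`: the solution of `D(μ; t_j, t_{j+1}) = ratio`, when it exists (else 0). -/
def muHatJ (n : ℕ) (a : ℝ) (X : Fin n → ℝ) (j : ℕ) : ℝ :=
  if h : ∃ μ > 0, Dfun μ (gridPt n j) (gridPt n (j + 1)) = ratioJ n a X j then h.choose else 0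

/-- `ε̂⁽ʲ⁾ₐ`. -/
def epsHatJ (n : ℕ) (a : ℝ) (X : Fin n → ℝ) (j : ℕ) : ℝ :=
  if ∃ μ > 0, Dfun μ (gridPt n j) (gridPt n (j + 1)) = ratioJ n a X j then
    (Phi (gridPt n j) - envP n a (empCdf n X) (gridPt n j)) /
      (Phi (gridPt n j) - Phi (gridPt n j - muHatJ n a X j))
  else 0

/-- The grid estimator `ε̂*ₐ = max_j ε̂⁽ʲ⁾ₐ`. -/
def epsHatStar (n : ℕ) (a : ℝ) (X : Fin n → ℝ) : ℝ :=
  sSup ((fun j => epsHatJ n a X j) '' (Set.Icc 1 (Nat.ceil (2 * Real.log n))))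

/-- The statistic `W_n⁺`, as a function of a uniform sample. -/
def WnPlus (n : ℕ) (U : Fin n → ℝ) : ℝ :=
  sSup ((fun t => Real.sqrt n * |empCdf n U t - t| / Real.sqrt (t * (1 - t))) ''
    (Set.Icc (1 / 2) (Phi (Real.sqrt (2 * Real.log n)))))

/-- The statistic `Y_n`, as a function of the sample, for underlying cdf `F`. -/
def Yn (n : ℕ) (F : ℝ → ℝ) (X : Fin n → ℝ) : ℝ :=
  sSup ((fun t => Real.sqrt n * |empCdf n X t - F t| / Real.sqrt (F t * (1 - F t))) ''
    (Set.Icc 0 (Real.sqrt (2 * Real.log n))))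

/-- The statistic `W_n⁺⁺(c₀)`, as a function of the sample, for underlying cdf `F`. -/
def WnPP (c0 : ℝ) (n : ℕ) (F : ℝ → ℝ) (X : Fin n → ℝ) : ℝ :=
  sSup ((fun x => Real.sqrt n * |empCdf n X x - F x| / Real.sqrt (F x * (1 - F x))) ''
    {x : ℝ | empCdf n X 0 - Real.sqrt (c0 * Real.log n / n) ≤ F x ∧
      F x ≤ Phi (Real.sqrt (2 * Real.log n))})

/-- cdf of the two-point Gaussian mixture `(1-ε)N(0,1) + εN(μ,1)`. -/
def twoPointCdf (ε μ : ℝ) (t : ℝ) : ℝ := (1 - ε) * Phi t + ε * Phi (t - μ)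

/-- cdf of the one-sided Gaussian mixture `(1-ε)N(0,1) + ε ∫ N(μ,1) dH(μ)`. -/
def oneSidedCdf (ε : ℝ) (H : Measure ℝ) (t : ℝ) : ℝ :=
  (1 - ε) * Phi t + ε * ∫ m, Phi (t - m) ∂H

/-- cdf of the Uniform(0,1) distribution. -/
def unifCdf (t : ℝ) : ℝ := max 0 (min t 1)

/-- `X₁, …, Xₙ` are i.i.d. with cdf `F` under `P`. -/
def IIDWithCdf {Ω : Type} [MeasurableSpace Ω] (P : Measure Ω) {n : ℕ}
    (X : Fin n → Ω → ℝ) (F : ℝ → ℝ) : Prop :=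
  (∀ i, Measurable (X i)) ∧ iIndepFun X P ∧
    ∀ i t, P {ω | X i ω ≤ t} = ENNReal.ofReal (F t)

/-- The event that `F` lies inside the envelope on `[0, √(2 log n)]`. -/
def EnvEvent (n : ℕ) (a : ℝ) (F : ℝ → ℝ) (X : Fin n → ℝ) : Prop :=
  ∀ t ∈ Set.Icc (0 : ℝ) (Real.sqrt (2 * Real.log n)),
    envM n a (empCdf n X) t ≤ F t ∧ F t ≤ envP n a (empCdf n X) t

/-- The detection boundary `ρ*(β)`. -/
def rhoStar (β : ℝ) : ℝ :=
  if β ≤ 3 / 4 then β - 1 / 2 else (1 - Real.sqrt (1 - β)) ^ 2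

/-!
The mixture cdf `F = ∫ Φ(· - μ) dH` is continuous and strictly increasing, so the `Vᵢ = F(Xᵢ)`
are i.i.d. uniform, and `Yₙ` is the supremum of the standardized uniform empirical process of
`V` over `F([0, T])`, `T = √(2 log n)`. Since `H` lives on `[0, T]`, `Φ(t - T) ≤ F(t) ≤ Φ(t)`,
so `F([0, T]) ⊆ [1 - b, b]` with `b = Φ(T)`. Over `[1/2, b]` the supremum is `Wₙ⁺` of `V`.
Over `[1 - b, 1/2)` the reflection `u ↦ 1 - u` turns the process into that of the uniform
sample `1 - V` at points `s ∈ (1/2, b]`, with the empirical cdf replaced by its left limit at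
`s`; being a limit of values at points of `(1/2, s)`, it is bounded by `Wₙ⁺` of `1 - V`.
A union bound over the two halves gives `P(Yₙ ≥ c) ≤ 2 P(Wₙ⁺ ≥ c)`.
-/

open Topology

lemma stdPdf_eq_gaussianPDFReal : stdPdf = gaussianPDFReal 0 1 := by
  funext x
  simp [stdPdf, gaussianPDFReal]

lemma integrable_stdPdf : Integrable stdPdf :=
  stdPdf_eq_gaussianPDFReal ▸ integrable_gaussianPDFReal 0 1

lemma Phi_eq_cdf_gaussianReal : Phi = cdf (gaussianReal 0 1) := by
  funext t
  rw [cdf_eq_real, measureReal_def, gaussianReal_apply_eq_integral 0 one_ne_zero,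
    ENNReal.toReal_ofReal (setIntegral_nonneg measurableSet_Iic
      fun x _ => gaussianPDFReal_nonneg 0 1 x), Phi, stdPdf_eq_gaussianPDFReal]

lemma Phi_sub_Phi (s t : ℝ) : Phi t - Phi s = ∫ x in s..t, stdPdf x :=
  intervalIntegral.integral_Iic_sub_Iic integrable_stdPdf.integrableOn
    integrable_stdPdf.integrableOn

lemma Phi_continuous : Continuous Phi := by
  have h : Phi = fun t => Phi 0 + ∫ x in (0 : ℝ)..t, stdPdf x := by
    funext t; rw [← Phi_sub_Phi]; ring
  rw [h]
  exact continuous_const.add (integrable_stdPdf.continuous_primitive 0)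

lemma Phi_strictMono : StrictMono Phi := fun s t hst => by
  rw [← sub_pos, Phi_sub_Phi]
  refine intervalIntegral.intervalIntegral_pos_of_pos_on integrable_stdPdf.intervalIntegrable
    (fun x _ => ?_) hst
  rw [stdPdf_eq_gaussianPDFReal]
  exact gaussianPDFReal_pos 0 1 x one_ne_zero

lemma tendsto_Phi_atBot : Tendsto Phi atBot (𝓝 0) :=
  Phi_eq_cdf_gaussianReal ▸ tendsto_cdf_atBot _

lemma tendsto_Phi_atTop : Tendsto Phi atTop (𝓝 1) :=
  Phi_eq_cdf_gaussianReal ▸ tendsto_cdf_atTop _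

lemma Phi_lt_one (t : ℝ) : Phi t < 1 :=
  (Phi_strictMono (lt_add_one t)).trans_le (Phi_eq_cdf_gaussianReal ▸ cdf_le_one _ _)

lemma Phi_neg (t : ℝ) : Phi (-t) = 1 - Phi t := by
  have := nullSingletonClass_gaussianReal (μ := 0) one_ne_zero
  have hsymm : (gaussianReal 0 1).map (fun x => -x) = gaussianReal 0 1 := by
    simpa using gaussianReal_map_neg (μ := 0) (v := 1)
  rw [Phi_eq_cdf_gaussianReal, cdf_eq_real, cdf_eq_real, ← hsymm,
    map_measureReal_apply measurable_neg measurableSet_Iic, Set.neg_preimage, Set.neg_Iic, neg_neg,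
    hsymm, ← probReal_compl_eq_one_sub measurableSet_Iic, Set.compl_Iic]
  exact measureReal_congr Ioi_ae_eq_Ici.symm

lemma Phi_zero : Phi 0 = 1 / 2 := by
  linarith [neg_zero (G := ℝ) ▸ Phi_neg 0]

lemma norm_Phi_le_one (t : ℝ) : ‖Phi t‖ ≤ 1 := by
  rw [Phi_eq_cdf_gaussianReal, Real.norm_of_nonneg (cdf_nonneg _ _)]
  exact cdf_le_one _ _

def gaussMixCdf (H : Measure ℝ) (t : ℝ) : ℝ := ∫ m, Phi (t - m) ∂H

section GaussMixCdf

variable {H : Measure ℝ}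

lemma integrable_Phi_sub [IsFiniteMeasure H] (t : ℝ) : Integrable (fun m => Phi (t - m)) H :=
  Integrable.of_bound (Phi_continuous.comp (continuous_sub_left t)).aestronglyMeasurable 1
    (ae_of_all _ fun _ => norm_Phi_le_one _)

lemma gaussMixCdf_strictMono [IsProbabilityMeasure H] : StrictMono (gaussMixCdf H) := by
  intro s t hst
  have hpos (m : ℝ) : 0 < Phi (t - m) - Phi (s - m) := sub_pos.2 (Phi_strictMono (by linarith))
  rw [← sub_pos, gaussMixCdf, gaussMixCdf, ← integral_sub (integrable_Phi_sub t)
    (integrable_Phi_sub s), integral_pos_iff_support_of_nonneg (fun m => (hpos m).le)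
    ((integrable_Phi_sub t).sub (integrable_Phi_sub s))]
  simp [Function.support, (hpos _).ne']

lemma gaussMixCdf_continuous [IsFiniteMeasure H] : Continuous (gaussMixCdf H) :=
  continuous_of_dominated (fun t => (integrable_Phi_sub t).aestronglyMeasurable)
    (fun _ => ae_of_all _ fun _ => norm_Phi_le_one _) (integrable_const 1)
    (ae_of_all _ fun m => Phi_continuous.comp (continuous_sub_right m))

lemma tendsto_gaussMixCdf [IsProbabilityMeasure H] {l : Filter ℝ} [l.IsCountablyGenerated]
    {a : ℝ} (hl : ∀ m, Tendsto (fun t => Phi (t - m)) l (𝓝 a)) :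
    Tendsto (gaussMixCdf H) l (𝓝 a) := by
  show Tendsto (fun t => ∫ m, Phi (t - m) ∂H) l _
  simpa using tendsto_integral_filter_of_dominated_convergence (μ := H) (fun _ => 1)
    (Eventually.of_forall fun t => (integrable_Phi_sub t).aestronglyMeasurable)
    (Eventually.of_forall fun _ => ae_of_all _ fun _ => norm_Phi_le_one _)
    (integrable_const 1) (ae_of_all _ hl)

lemma tendsto_gaussMixCdf_atBot [IsProbabilityMeasure H] :
    Tendsto (gaussMixCdf H) atBot (𝓝 0) :=
  tendsto_gaussMixCdf fun m => by
    simpa [Function.comp_def, ← sub_eq_add_neg] using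
      tendsto_Phi_atBot.comp (tendsto_atBot_add_const_right _ (-m) tendsto_id)

lemma tendsto_gaussMixCdf_atTop [IsProbabilityMeasure H] :
    Tendsto (gaussMixCdf H) atTop (𝓝 1) :=
  tendsto_gaussMixCdf fun m => by
    simpa [Function.comp_def, ← sub_eq_add_neg] using
      tendsto_Phi_atTop.comp (tendsto_atTop_add_const_right _ (-m) tendsto_id)

lemma gaussMixCdf_le_Phi [IsProbabilityMeasure H] (hH : ∀ᵐ m ∂H, 0 ≤ m) (t : ℝ) :
    gaussMixCdf H t ≤ Phi t := by
  simpa [gaussMixCdf] using integral_mono_ae (integrable_Phi_sub t) (integrable_const (Phi t))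
    (hH.mono fun m hm => Phi_strictMono.monotone (sub_le_self t hm))

lemma Phi_sub_le_gaussMixCdf [IsProbabilityMeasure H] {T : ℝ} (hH : ∀ᵐ m ∂H, m ≤ T) (t : ℝ) :
    Phi (t - T) ≤ gaussMixCdf H t := by
  simpa [gaussMixCdf] using integral_mono_ae (integrable_const (Phi (t - T)))
    (integrable_Phi_sub t) (hH.mono fun m hm => Phi_strictMono.monotone (sub_le_sub_left hm t))

lemma gaussMixCdf_mem_Icc [IsProbabilityMeasure H] {T : ℝ} (hH : ∀ᵐ m ∂H, m ∈ Set.Icc 0 T)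
    {t : ℝ} (ht : t ∈ Set.Icc 0 T) : gaussMixCdf H t ∈ Set.Icc (1 - Phi T) (Phi T) := by
  refine ⟨?_, (gaussMixCdf_le_Phi (hH.mono fun _ hm => hm.1) t).trans
    (Phi_strictMono.monotone ht.2)⟩
  rw [← Phi_neg]
  exact (Phi_strictMono.monotone (by linarith [ht.1])).trans
    (Phi_sub_le_gaussMixCdf (hH.mono fun _ hm => hm.2) t)

end GaussMixCdf

lemma unifCdf_continuous : Continuous unifCdf :=
  continuous_const.max (continuous_id.min continuous_const)

lemma unifCdf_nonneg (u : ℝ) : 0 ≤ unifCdf u := le_max_left _ _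

lemma unifCdf_one_sub (u : ℝ) : unifCdf (1 - u) = 1 - unifCdf u := by
  simp only [unifCdf, max_def, min_def]
  split_ifs <;> linarith

namespace IIDWithCdf

variable {Ω Ω' : Type} [MeasurableSpace Ω] [MeasurableSpace Ω'] {P : Measure Ω} {Q : Measure Ω'}
  {n : ℕ} {X : Fin n → Ω → ℝ} {Y : Fin n → Ω' → ℝ} {F : ℝ → ℝ}

lemma map_eq_map [IsFiniteMeasure P] (hX : IIDWithCdf P X F) (hY : IIDWithCdf Q Y F)
    (i j : Fin n) : P.map (X i) = Q.map (Y j) :=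
  Measure.ext_of_Iic _ _ fun t => by
    rw [Measure.map_apply (hX.1 i) measurableSet_Iic,
      Measure.map_apply (hY.1 j) measurableSet_Iic]
    exact (hX.2.2 i t).trans (hY.2.2 j t).symm

lemma measure_preimage_eq [IsProbabilityMeasure P] [IsProbabilityMeasure Q]
    (hX : IIDWithCdf P X F) (hY : IIDWithCdf Q Y F) {S : Set (Fin n → ℝ)}
    (hS : MeasurableSet S) :
    P {ω | (fun i => X i ω) ∈ S} = Q {ω | (fun i => Y i ω) ∈ S} := by
  change P ((fun ω i => X i ω) ⁻¹' S) = Q ((fun ω i => Y i ω) ⁻¹' S)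
  rw [← Measure.map_apply (measurable_pi_lambda _ hX.1) hS,
    ← Measure.map_apply (measurable_pi_lambda _ hY.1) hS,
    (iIndepFun_iff_map_fun_eq_pi_map fun i => (hX.1 i).aemeasurable).1 hX.2.1,
    (iIndepFun_iff_map_fun_eq_pi_map fun i => (hY.1 i).aemeasurable).1 hY.2.1]
  congr 2
  exact funext fun i => hX.map_eq_map hY i i

lemma measure_lt [IsProbabilityMeasure P] (hX : IIDWithCdf P X F) (hF : Continuous F)
    (i : Fin n) (t : ℝ) : P {ω | X i ω < t} = ENNReal.ofReal (F t) := by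
  set μ := P.map (X i)
  have : IsProbabilityMeasure μ := Measure.isProbabilityMeasure_map (hX.1 i).aemeasurable
  have hμ (s : ℝ) : μ (Set.Iic s) = ENNReal.ofReal (F s) := by
    rw [Measure.map_apply (hX.1 i) measurableSet_Iic]; exact hX.2.2 i s
  have hcont : Continuous (cdf μ) := by
    have : cdf μ = fun s => max (F s) 0 := funext fun s => by
      rw [cdf_eq_real, measureReal_def, hμ, ENNReal.toReal_ofReal']
    exact this ▸ hF.max continuous_const
  calc P {ω | X i ω < t} = (cdf μ).measure (Set.Iio t) := by
        rw [measure_cdf, Measure.map_apply (hX.1 i) measurableSet_Iio]; rfl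
    _ = ENNReal.ofReal (F t) := by
        rw [(cdf μ).measure_Iio (tendsto_cdf_atBot μ), sub_zero,
          hcont.continuousWithinAt.leftLim_eq, ofReal_cdf, hμ]

lemma comp_of_strictMono [IsProbabilityMeasure P] (hX : IIDWithCdf P X F) (hF : Continuous F)
    (hFm : StrictMono F) (hF0 : Tendsto F atBot (𝓝 0)) (hF1 : Tendsto F atTop (𝓝 1)) :
    IIDWithCdf P (fun i ω => F (X i ω)) unifCdf := by
  refine ⟨fun i => hF.measurable.comp (hX.1 i), hX.2.1.comp _ fun _ => hF.measurable,
    fun i u => ?_⟩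
  rcases le_or_gt u 0 with hu0 | hu0
  · have hpos (t : ℝ) : u < F t :=
      hu0.trans_lt ((hFm.monotone.le_of_tendsto hF0 (t - 1)).trans_lt (hFm (sub_one_lt t)))
    simp [unifCdf, hu0, (hpos _).not_ge]
  rcases le_or_gt 1 u with hu1 | hu1
  · have hlt (t : ℝ) : F t < u :=
      ((hFm (lt_add_one t)).trans_le (hFm.monotone.ge_of_tendsto hF1 _)).trans_le hu1
    simp [unifCdf, hu1, (hlt _).le]
  obtain ⟨t, rfl⟩ : u ∈ Set.range F := mem_range_of_exists_le_of_exists_ge hF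
    (hF0.eventually (ge_mem_nhds hu0)).exists (hF1.eventually (le_mem_nhds hu1)).exists
  simp only [hFm.le_iff_le]
  rw [hX.2.2 i t, unifCdf, min_eq_left hu1.le, max_eq_right hu0.le]

lemma one_sub [IsProbabilityMeasure P] (hX : IIDWithCdf P X unifCdf) :
    IIDWithCdf P (fun i ω => 1 - X i ω) unifCdf := by
  refine ⟨fun i => measurable_const.sub (hX.1 i),
    hX.2.1.comp _ fun _ => measurable_const.sub measurable_id, fun i u => ?_⟩
  have : {ω | 1 - X i ω ≤ u} = {ω | X i ω < 1 - u}ᶜ := by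
    ext ω; simp only [Set.mem_ofPred_eq, Set.mem_compl_iff, not_lt, sub_le_comm]
  rw [this, measure_compl (measurableSet_lt (hX.1 i) measurable_const) (measure_ne_top _ _),
    measure_univ, hX.measure_lt unifCdf_continuous, ← ENNReal.ofReal_one,
    ← ENNReal.ofReal_sub _ (unifCdf_nonneg _), unifCdf_one_sub, sub_sub_cancel]

end IIDWithCdf

lemma le_csSup_image_insert_rat_of_tendsto_nhdsGT {f : ℝ → ℝ} {a b t : ℝ}
    (hf : BddAbove (f '' Set.Icc a b)) (ht : t ∈ Set.Icc a b)
    (hcont : t < b → Tendsto f (𝓝[>] t) (𝓝 (f t))) :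
    f t ≤ sSup (f '' insert b (Set.Icc a b ∩ Set.range ((↑) : ℚ → ℝ))) := by
  have hb : b ∈ Set.Icc a b := ⟨ht.1.trans ht.2, le_rfl⟩
  have hbdd : BddAbove (f '' insert b (Set.Icc a b ∩ Set.range ((↑) : ℚ → ℝ))) :=
    hf.mono (Set.image_mono (Set.insert_subset hb Set.inter_subset_left))
  rcases ht.2.eq_or_lt with rfl | htb
  · exact le_csSup hbdd (Set.mem_image_of_mem f (Set.mem_insert _ _))
  set s := Set.Ioo t b ∩ Set.range ((↑) : ℚ → ℝ)
  have : (𝓝[s] t).NeBot := mem_closure_iff_nhdsWithin_neBot.1 <|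
    closure_minimal (Rat.denseRange_cast.open_subset_closure_inter isOpen_Ioo) isClosed_closure
      (by rw [closure_Ioo htb.ne]; exact Set.left_mem_Icc.2 htb.le)
  exact le_of_tendsto ((hcont htb).mono_left (nhdsWithin_mono _ fun x (hx : x ∈ s) => hx.1.1))
    (eventually_nhdsWithin_of_forall fun x (hx : x ∈ s) => le_csSup hbdd (Set.mem_image_of_mem f
      (Set.mem_insert_of_mem _ ⟨⟨ht.1.trans hx.1.1.le, hx.1.2.le⟩, hx.2⟩)))

lemma measurable_csSup_image_Icc {α : Type*} [MeasurableSpace α] {f : α → ℝ → ℝ} {a b : ℝ}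
    (hab : a ≤ b)
    (hmeas : ∀ t, Measurable fun v => f v t) (hbdd : ∀ v, BddAbove (f v '' Set.Icc a b))
    (hcont : ∀ v, ∀ t ∈ Set.Ico a b, Tendsto (f v) (𝓝[>] t) (𝓝 (f v t))) :
    Measurable fun v => sSup (f v '' Set.Icc a b) := by
  set D := insert b (Set.Icc a b ∩ Set.range ((↑) : ℚ → ℝ))
  have hD : D ⊆ Set.Icc a b := Set.insert_subset ⟨hab, le_rfl⟩ Set.inter_subset_left
  have heq (v) : sSup (f v '' Set.Icc a b) = sSup (f v '' D) :=
    le_antisymm (csSup_le ((Set.nonempty_Icc.2 hab).image _) (Set.forall_mem_image.2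
        fun t ht => le_csSup_image_insert_rat_of_tendsto_nhdsGT (hbdd v) ht
          fun htb => hcont v t ⟨ht.1, htb⟩))
      (csSup_le_csSup (hbdd v) ((Set.insert_nonempty _ _).image _) (Set.image_mono hD))
  simp_rw [heq]
  exact Measurable.sSup (((Set.countable_range _).mono Set.inter_subset_right).insert b)
    fun t _ => hmeas t

def normDev (n : ℕ) (v : Fin n → ℝ) (t : ℝ) : ℝ :=
  Real.sqrt n * |empCdf n v t - t| / Real.sqrt (t * (1 - t))

def empCdfLT (n : ℕ) (v : Fin n → ℝ) (t : ℝ) : ℝ :=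
  (n : ℝ)⁻¹ * ∑ i, if v i < t then (1 : ℝ) else 0

def supNormDev (n : ℕ) (b : ℝ) (v : Fin n → ℝ) : ℝ :=
  sSup (normDev n v '' Set.Icc (1 / 2) b)

section Empirical

variable {n : ℕ}

lemma empCdf_mem_Icc (v : Fin n → ℝ) (t : ℝ) : empCdf n v t ∈ Set.Icc 0 1 := by
  have hle (i : Fin n) : (if v i ≤ t then (1 : ℝ) else 0) ≤ 1 := by split_ifs <;> norm_num
  have hnn (i : Fin n) : 0 ≤ (if v i ≤ t then (1 : ℝ) else 0) := by split_ifs <;> norm_num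
  refine ⟨mul_nonneg (by positivity) (Finset.sum_nonneg fun i _ => hnn i),
    inv_mul_le_one_of_le₀ ?_ n.cast_nonneg⟩
  simpa using Finset.sum_le_sum fun i (_ : i ∈ Finset.univ) => hle i

lemma measurable_empCdf (t : ℝ) : Measurable fun v : Fin n → ℝ => empCdf n v t :=
  (Finset.measurable_sum _ fun i _ => Measurable.ite
    (measurableSet_le (measurable_pi_apply i) measurable_const) measurable_const
    measurable_const).const_mul _

lemma measurable_normDev (t : ℝ) : Measurable fun v : Fin n → ℝ => normDev n v t :=
  (((measurable_empCdf t).sub_const t).abs.const_mul _).div_const _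

lemma empCdf_comp_strictMono {F : ℝ → ℝ} (hF : StrictMono F) (x : Fin n → ℝ) (t : ℝ) :
    empCdf n (fun i => F (x i)) (F t) = empCdf n x t := by
  simp only [empCdf, hF.le_iff_le]

lemma empCdf_one_sub (hn : n ≠ 0) (v : Fin n → ℝ) (s : ℝ) :
    empCdf n v (1 - s) = 1 - empCdfLT n (fun i => 1 - v i) s := by
  have hsplit (i : Fin n) :
      (if v i ≤ 1 - s then (1 : ℝ) else 0) = 1 - if 1 - v i < s then 1 else 0 := by
    by_cases h : v i ≤ 1 - s
    · rw [if_pos h, if_neg (by linarith)]; norm_num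
    · rw [if_neg h, if_pos (by linarith)]; norm_num
  simp only [empCdf, empCdfLT, hsplit, Finset.sum_sub_distrib, Finset.sum_const,
    Finset.card_univ, Fintype.card_fin, nsmul_eq_mul, mul_one, mul_sub]
  rw [inv_mul_cancel₀ (Nat.cast_ne_zero.2 hn)]

lemma normDev_one_sub (v : Fin n → ℝ) (s : ℝ) :
    normDev n v (1 - s) =
      Real.sqrt n * |empCdfLT n (fun i => 1 - v i) s - s| / Real.sqrt (s * (1 - s)) := by
  rcases eq_or_ne n 0 with rfl | hn
  · simp [normDev]
  rw [normDev, empCdf_one_sub hn, show (1 - s) * (1 - (1 - s)) = s * (1 - s) by ring,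
    show 1 - empCdfLT n (fun i => 1 - v i) s - (1 - s) =
      -(empCdfLT n (fun i => 1 - v i) s - s) by ring, abs_neg]

lemma tendsto_ite_le_nhdsGT (a t : ℝ) :
    Tendsto (fun x : ℝ => if a ≤ x then (1 : ℝ) else 0) (𝓝[>] t)
      (𝓝 (if a ≤ t then 1 else 0)) := by
  by_cases h : a ≤ t
  · rw [if_pos h]
    exact tendsto_const_nhds.congr' (eventually_nhdsWithin_of_forall fun x (hx : t < x) =>
      (if_pos (h.trans hx.le)).symm)
  · rw [if_neg h]
    exact tendsto_const_nhds.congr' (eventually_nhdsWithin_of_eventually_nhds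
      ((eventually_lt_nhds (not_le.1 h)).mono fun x hx => (if_neg (not_le.2 hx)).symm))

lemma tendsto_ite_le_nhdsLT (a t : ℝ) :
    Tendsto (fun x : ℝ => if a ≤ x then (1 : ℝ) else 0) (𝓝[<] t)
      (𝓝 (if a < t then 1 else 0)) := by
  by_cases h : a < t
  · rw [if_pos h]
    exact tendsto_const_nhds.congr' (eventually_nhdsWithin_of_eventually_nhds
      ((eventually_gt_nhds h).mono fun x hx => (if_pos hx.le).symm))
  · rw [if_neg h]
    exact tendsto_const_nhds.congr' (eventually_nhdsWithin_of_forall fun x (hx : x < t) =>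
      (if_neg (not_le.2 (hx.trans_le (not_lt.1 h)))).symm)

lemma tendsto_empCdf_nhdsGT (v : Fin n → ℝ) (t : ℝ) :
    Tendsto (empCdf n v) (𝓝[>] t) (𝓝 (empCdf n v t)) :=
  (tendsto_finsetSum _ fun i _ => tendsto_ite_le_nhdsGT (v i) t).const_mul _

lemma tendsto_empCdf_nhdsLT (v : Fin n → ℝ) (t : ℝ) :
    Tendsto (empCdf n v) (𝓝[<] t) (𝓝 (empCdfLT n v t)) :=
  (tendsto_finsetSum _ fun i _ => tendsto_ite_le_nhdsLT (v i) t).const_mul _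

lemma tendsto_normDev (v : Fin n → ℝ) {l : Filter ℝ} {t A : ℝ} (ht : t ∈ Set.Ioo 0 1)
    (hl : l ≤ 𝓝 t) (hA : Tendsto (empCdf n v) l (𝓝 A)) :
    Tendsto (normDev n v) l (𝓝 (Real.sqrt n * |A - t| / Real.sqrt (t * (1 - t)))) := by
  have hden : Real.sqrt (t * (1 - t)) ≠ 0 :=
    (Real.sqrt_pos.2 (mul_pos ht.1 (sub_pos.2 ht.2))).ne'
  exact (tendsto_const_nhds.mul ((hA.sub hl).abs)).div
    (((Real.continuous_sqrt.comp (continuous_id.mul (continuous_const.sub continuous_id))).tendsto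
      t).mono_left hl) hden

end Empirical

section SupNormDev

variable {n : ℕ} {b : ℝ}

lemma mem_Ioo_of_mem_Icc_half {t : ℝ} (hb : b < 1) (ht : t ∈ Set.Icc (1 / 2) b) :
    t ∈ Set.Ioo 0 1 :=
  ⟨by linarith [ht.1], ht.2.trans_lt hb⟩

lemma bddAbove_normDev_image (hb : b < 1) (v : Fin n → ℝ) :
    BddAbove (normDev n v '' Set.Icc (1 / 2) b) := by
  have hcont : ContinuousOn (fun t => Real.sqrt n / Real.sqrt (t * (1 - t))) (Set.Icc (1 / 2) b) :=
    continuousOn_const.div (by fun_prop) fun t ht => by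
      have ht' := mem_Ioo_of_mem_Icc_half hb ht
      exact (Real.sqrt_pos.2 (mul_pos ht'.1 (sub_pos.2 ht'.2))).ne'
  obtain ⟨K, hK⟩ := isCompact_Icc.bddAbove_image hcont
  refine ⟨K, Set.forall_mem_image.2 fun t ht => le_trans ?_ (hK (Set.mem_image_of_mem _ ht))⟩
  have ht' := mem_Ioo_of_mem_Icc_half hb ht
  have hv := empCdf_mem_Icc v t
  have habs : |empCdf n v t - t| ≤ 1 :=
    abs_le.2 ⟨by linarith [hv.1, ht'.2], by linarith [hv.2, ht'.1]⟩
  exact div_le_div_of_nonneg_right (mul_le_of_le_one_right (Real.sqrt_nonneg _) habs)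
    (Real.sqrt_nonneg _)

lemma measurable_supNormDev (hb2 : 1 / 2 ≤ b) (hb1 : b < 1) :
    Measurable (supNormDev n b) :=
  measurable_csSup_image_Icc hb2 measurable_normDev (bddAbove_normDev_image hb1)
    fun v t ht => tendsto_normDev v (mem_Ioo_of_mem_Icc_half hb1 (Set.Ico_subset_Icc_self ht))
      nhdsWithin_le_nhds (tendsto_empCdf_nhdsGT v t)

lemma normDev_le_supNormDev (hb : b < 1) (v : Fin n → ℝ) {t : ℝ}
    (ht : t ∈ Set.Icc (1 / 2) b) : normDev n v t ≤ supNormDev n b v :=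
  le_csSup (bddAbove_normDev_image hb v) (Set.mem_image_of_mem _ ht)

lemma normDev_le_supNormDev_one_sub (hb : b < 1) (v : Fin n → ℝ) {u : ℝ}
    (hu : u ∈ Set.Ico (1 - b) (1 / 2)) :
    normDev n v u ≤ supNormDev n b (fun i => 1 - v i) := by
  obtain ⟨s, hs, rfl⟩ : ∃ s ∈ Set.Ioc (1 / 2) b, u = 1 - s :=
    ⟨1 - u, ⟨by linarith [hu.2], by linarith [hu.1]⟩, by ring⟩
  rw [normDev_one_sub]
  refine le_of_tendsto (tendsto_normDev _
    (mem_Ioo_of_mem_Icc_half hb (Set.Ioc_subset_Icc_self hs)) nhdsWithin_le_nhds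
    (tendsto_empCdf_nhdsLT _ s)) ?_
  filter_upwards [Ioo_mem_nhdsLT hs.1] with x hx
  exact normDev_le_supNormDev hb _ ⟨hx.1.le, hx.2.le.trans hs.2⟩

lemma normDev_le_max_supNormDev (hb : b < 1) (v : Fin n → ℝ) {u : ℝ}
    (hu : u ∈ Set.Icc (1 - b) b) :
    normDev n v u ≤ max (supNormDev n b v) (supNormDev n b (fun i => 1 - v i)) := by
  rcases lt_or_ge u (1 / 2) with hu2 | hu2
  · exact le_max_of_le_right (normDev_le_supNormDev_one_sub hb v ⟨hu.1, hu2⟩)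
  · exact le_max_of_le_left (normDev_le_supNormDev hb v ⟨hu2, hu.2⟩)

lemma Yn_le_max_supNormDev {F : ℝ → ℝ} (hF : StrictMono F) (hb : b < 1)
    (hFb : ∀ t ∈ Set.Icc 0 (Real.sqrt (2 * Real.log n)), F t ∈ Set.Icc (1 - b) b)
    (x : Fin n → ℝ) :
    Yn n F x ≤ max (supNormDev n b fun i => F (x i)) (supNormDev n b fun i => 1 - F (x i)) := by
  refine csSup_le ((Set.nonempty_Icc.2 (Real.sqrt_nonneg _)).image _)
    (Set.forall_mem_image.2 fun t ht => ?_)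
  rw [← empCdf_comp_strictMono hF x t]
  exact normDev_le_max_supNormDev hb _ (hFb t ht)

end SupNormDev

/-- Lemma 3.1: the tail of `Yₙ` under a Gaussian mixture whose
mixing distribution is supported on `[0, √(2 log n)]` is at most twice the
tail of `Wₙ⁺`. -/
theorem stmt7 (n : ℕ) (H : Measure ℝ) (hH : IsProbabilityMeasure H)
    (hsupp : H (Set.Icc 0 (Real.sqrt (2 * Real.log n))) = 1)
    (Ω : Type) [MeasurableSpace Ω] (P : Measure Ω) (hP : IsProbabilityMeasure P)
    (X : Fin n → Ω → ℝ) (hX : IIDWithCdf P X (fun t => ∫ m, Phi (t - m) ∂H))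
    (Ω' : Type) [MeasurableSpace Ω'] (Q : Measure Ω') (hQ : IsProbabilityMeasure Q)
    (U : Fin n → Ω' → ℝ) (hU : IIDWithCdf Q U unifCdf) :
    ∀ c : ℝ, P {ω | c ≤ Yn n (fun t => ∫ m, Phi (t - m) ∂H) (fun i => X i ω)} ≤
      2 * Q {ω | c ≤ WnPlus n (fun i => U i ω)} := by
  intro c
  set T := Real.sqrt (2 * Real.log n)
  have hHT : ∀ᵐ m ∂H, m ∈ Set.Icc 0 T :=
    (ae_iff_measure_eq measurableSet_Icc.nullMeasurableSet).2 (hsupp.trans measure_univ.symm)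
  have hb2 : 1 / 2 ≤ Phi T := Phi_zero ▸ Phi_strictMono.monotone (Real.sqrt_nonneg _)
  have hV : IIDWithCdf P (fun i ω => gaussMixCdf H (X i ω)) unifCdf :=
    hX.comp_of_strictMono gaussMixCdf_continuous gaussMixCdf_strictMono
      tendsto_gaussMixCdf_atBot tendsto_gaussMixCdf_atTop
  set S := {v | c ≤ supNormDev n (Phi T) v}
  have hS : MeasurableSet S := measurable_supNormDev hb2 (Phi_lt_one T) measurableSet_Ici
  calc P {ω | c ≤ Yn n (gaussMixCdf H) (fun i => X i ω)}
      ≤ P ({ω | (fun i => gaussMixCdf H (X i ω)) ∈ S} ∪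
          {ω | (fun i => 1 - gaussMixCdf H (X i ω)) ∈ S}) :=
        measure_mono fun ω hω => le_max_iff.1 (hω.trans (Yn_le_max_supNormDev
          gaussMixCdf_strictMono (Phi_lt_one T) (fun t ht => gaussMixCdf_mem_Icc hHT ht) _))
    _ ≤ P {ω | (fun i => gaussMixCdf H (X i ω)) ∈ S} +
          P {ω | (fun i => 1 - gaussMixCdf H (X i ω)) ∈ S} := measure_union_le _ _
    _ = Q {ω | (fun i => U i ω) ∈ S} + Q {ω | (fun i => U i ω) ∈ S} := by
        rw [hV.measure_preimage_eq hU hS, hV.one_sub.measure_preimage_eq hU hS]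
    _ = 2 * Q {ω | c ≤ WnPlus n (fun i => U i ω)} := (two_mul _).symm
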